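/- arXiv:1706.04776 — 2 statements merged into one kernel-verified Lean document; each statement's English description precedes it below -/
import Mathlib

section
/- For any real numbers θ_1, …, θ_T, writing M = |∑_{n=1}^T e(θ_n)| with e(θ)=exp(2πiθ), one has ∏_{n=1}^T |1 + e(θ_n)| ≤ 2^T exp(−c(T − M)) for some absolute constant c > 0; in particular, if M ≤ T/2 then the product is at most 2^T e^{−cT/2}. -/
/-!
For a unit complex number `z`, `‖1 + z‖² = 2 + 2 re z ≤ 4 exp ((re z - 1) / 2)` by `1 + t ≤ exp t`.
Multiplying over the `e(θₙ)` and using `re ∑ zₙ ≤ ‖∑ zₙ‖` gives the bound with `c = 1/4`.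
-/

open Complex Finset

theorem norm_one_add_le_two_mul_exp {z : ℂ} (hz : ‖z‖ = 1) :
    ‖1 + z‖ ≤ 2 * Real.exp ((z.re - 1) / 4) := by
  have hsq : ‖1 + z‖ ^ 2 = 2 + 2 * z.re := by
    have hz2 : normSq z = 1 := by rw [normSq_eq_norm_sq, hz, one_pow]
    rw [← normSq_eq_norm_sq, normSq_add, hz2]
    simp only [normSq_one, one_mul, conj_re]
    ring
  have hrhs : (2 * Real.exp ((z.re - 1) / 4)) ^ 2 = 4 * Real.exp ((z.re - 1) / 2) := by
    rw [mul_pow, sq (Real.exp _), ← Real.exp_add]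
    ring_nf
  refine (pow_le_pow_iff_left₀ (norm_nonneg _) (by positivity) two_ne_zero).mp ?_
  rw [hsq, hrhs]
  linarith [Real.add_one_le_exp ((z.re - 1) / 2)]

theorem prod_norm_one_add_le {ι : Type*} [Fintype ι] (z : ι → ℂ) (hz : ∀ i, ‖z i‖ = 1) :
    ∏ i, ‖1 + z i‖ ≤ 2 ^ Fintype.card ι *
      Real.exp (-(1 / 4) * (Fintype.card ι - ‖∑ i, z i‖)) := by
  have hre : ∑ i, (z i).re ≤ ‖∑ i, z i‖ := by
    rw [← re_sum]
    exact re_le_norm _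
  calc ∏ i, ‖1 + z i‖ ≤ ∏ i, 2 * Real.exp (((z i).re - 1) / 4) :=
        prod_le_prod (fun i _ => norm_nonneg _) fun i _ => norm_one_add_le_two_mul_exp (hz i)
    _ = 2 ^ Fintype.card ι * Real.exp (∑ i, ((z i).re - 1) / 4) := by
        rw [prod_mul_distrib, prod_const, ← Real.exp_sum, card_univ]
    _ ≤ 2 ^ Fintype.card ι * Real.exp (-(1 / 4) * (Fintype.card ι - ‖∑ i, z i‖)) := by
        gcongr
        rw [← sum_div, sum_sub_distrib, sum_const, card_univ, nsmul_one]
        linarith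

theorem norm_exp_two_pi_I_mul (θ : ℝ) : ‖exp (2 * Real.pi * I * (θ : ℂ))‖ = 1 := by
  rw [norm_exp]
  simp

/-- There is an absolute constant `c > 0` such that for any reals `θ_1,…,θ_T`, writing
`M = |∑ e(θ_n)|`, one has `∏ |1 + e(θ_n)| ≤ 2^T exp(−c(T − M))`; in particular if `M ≤ T/2`
then the product is at most `2^T e^{−cT/2}`. -/
theorem stmt13 : ∃ c : ℝ, 0 < c ∧ ∀ (T : ℕ) (θ : Fin T → ℝ),
    ((∏ n, ‖(1 : ℂ) + Complex.exp (2 * Real.pi * Complex.I * (θ n : ℂ))‖)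
        ≤ 2 ^ T * Real.exp (-c * ((T : ℝ) -
            ‖∑ n, Complex.exp (2 * Real.pi * Complex.I * (θ n : ℂ))‖))) ∧
    (‖∑ n, Complex.exp (2 * Real.pi * Complex.I * (θ n : ℂ))‖ ≤ (T : ℝ) / 2 →
      (∏ n, ‖(1 : ℂ) + Complex.exp (2 * Real.pi * Complex.I * (θ n : ℂ))‖)
        ≤ 2 ^ T * Real.exp (-c * (T : ℝ) / 2)) := by
  refine ⟨1 / 4, by norm_num, fun T θ => ?_⟩
  have key := prod_norm_one_add_le _ fun n => norm_exp_two_pi_I_mul (θ n)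
  rw [Fintype.card_fin] at key
  refine ⟨key, fun hM => key.trans ?_⟩
  gcongr
  linarith
end

section
/- Let K ≥ 1 be a real number, T ≥ 1 an integer, γ_1,…,γ_T complex numbers with |γ_n| ≤ 1, and s_1 < … < s_T a strictly increasing sequence of nonnegative integers with s_T ≤ S. Then ∑_{k ≤ K} ∑*_{c mod k} |∑_{n ≤ T} γ_n e_k(c s_n)|² ≪ (K² + S)T, where ∑* denotes summation over c coprime to k, and e_k(z) = exp(2πi z/k). -/
/-!
Gallagher's method. For a trigonometric polynomial `F` with frequencies in `[-S, S]` and any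
interval `I ∋ x` of length `δ`, comparing `F(x)²` with its values on `I` gives
`|F(x)|² ≤ δ⁻¹ ∫_I |F|² + ∫_I 2|F||F'|`. Reduced fractions `c/k` with `k ≤ N` are
`N⁻²`-separated (`|c k' - c' k| ≥ 1`), so the arcs of length `δ = N⁻²` around them are disjoint
and lie in two periods; summing, `∑ |F(c/k)|² ≤ 2 ∫₀¹ (N² |F|² + 2|F||F'|)`. Parseval and AM-GM
bound the right side by `2 (N² + 4π S) ∑ |γₙ|²`.
-/

open Finset Complex MeasureTheory intervalIntegral Function
open scoped Real ComplexConjugate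

noncomputable def trigPoly {ι : Type*} (A : Finset ι) (a : ι → ℂ) (s : ι → ℤ) (x : ℝ) : ℂ :=
  ∑ n ∈ A, a n * cexp (2 * π * I * s n * x)

lemma integral_cexp_two_pi_I_int_mul (d : ℤ) :
    ∫ x in (0 : ℝ)..1, cexp (2 * π * I * d * x) = if d = 0 then 1 else 0 := by
  split_ifs with hd
  · simp [hd]
  · have hc : (2 * π * I * d : ℂ) ≠ 0 := by simp [Real.pi_ne_zero, hd]
    have h1 : cexp (2 * π * I * d) = 1 := by
      rw [mul_comm]; exact exp_int_mul_two_pi_mul_I d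
    simp [integral_exp_mul_complex hc, h1]

section trigPoly

variable {ι : Type*} (A : Finset ι) (a : ι → ℂ) (s : ι → ℤ)

lemma continuous_trigPoly : Continuous (trigPoly A a s) := by
  unfold trigPoly; fun_prop

lemma trigPoly_periodic : Periodic (trigPoly A a s) 1 := by
  intro x
  refine sum_congr rfl fun n _ => ?_
  have h1 : cexp (2 * π * I * s n) = 1 := by
    rw [mul_comm]; exact exp_int_mul_two_pi_mul_I (s n)
  push_cast
  rw [mul_add, mul_one, exp_add, h1, mul_one]

lemma hasDerivAt_trigPoly (x : ℝ) :
    HasDerivAt (trigPoly A a s) (trigPoly A (fun n => 2 * π * I * s n * a n) s x) x := by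
  unfold trigPoly
  refine HasDerivAt.fun_sum fun n _ => ?_
  have h : HasDerivAt (fun y : ℝ => 2 * π * I * s n * (y : ℂ)) (2 * π * I * s n) x := by
    simpa using ((hasDerivAt_id (x : ℂ)).const_mul (2 * π * I * s n)).comp_ofReal
  exact (h.cexp.const_mul (a n)).congr_deriv (by ring)

lemma trigPoly_mul_conj (x : ℝ) :
    trigPoly A a s x * conj (trigPoly A a s x) =
      ∑ n ∈ A, ∑ m ∈ A, a n * conj (a m) * cexp (2 * π * I * ((s n - s m : ℤ) : ℂ) * x) := by
  simp only [trigPoly, map_sum, sum_mul_sum, map_mul, ← exp_conj]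
  refine sum_congr rfl fun n _ => sum_congr rfl fun m _ => ?_
  rw [mul_mul_mul_comm, ← exp_add]
  congr 2
  simp only [conj_ofReal, conj_I, map_intCast, map_ofNat]
  push_cast
  ring

lemma integral_norm_trigPoly_sq (hs : Set.InjOn s A) :
    ∫ x in (0 : ℝ)..1, ‖trigPoly A a s x‖ ^ 2 = ∑ n ∈ A, ‖a n‖ ^ 2 := by
  have hint : ∀ n m, IntervalIntegrable
      (fun x : ℝ => a n * conj (a m) * cexp (2 * π * I * ((s n - s m : ℤ) : ℂ) * x)) volume 0 1 :=
    fun n m => (by fun_prop : Continuous _).intervalIntegrable _ _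
  have hdiag : ∀ n ∈ A, ∑ m ∈ A, (if s n - s m = 0 then a n * conj (a m) else 0) =
      (‖a n‖ ^ 2 : ℂ) := by
    intro n hn
    rw [sum_eq_single_of_mem n hn fun m hm hmn => if_neg fun h =>
      hmn (hs hm hn (sub_eq_zero.mp h).symm), if_pos (sub_self _), mul_conj']
  apply ofReal_injective
  rw [← intervalIntegral.integral_ofReal]
  push_cast
  simp_rw [← mul_conj' (trigPoly A a s _), trigPoly_mul_conj]
  rw [integral_finsetSum fun n _ =>
    (continuous_finsetSum _ fun m _ => by fun_prop).intervalIntegrable _ _]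
  refine sum_congr rfl fun n hn => ?_
  rw [integral_finsetSum fun m _ => hint n m, ← hdiag n hn]
  refine sum_congr rfl fun m _ => ?_
  rw [intervalIntegral.integral_const_mul, integral_cexp_two_pi_I_int_mul]
  split_ifs <;> simp

end trigPoly

section Gallagher

variable {E : Type*} [NormedAddCommGroup E] [NormedSpace ℝ E] [CompleteSpace E]

lemma norm_sub_le_integral_norm_deriv {g g' : ℝ → E} (hg : ∀ t, HasDerivAt g (g' t) t)
    (hg' : Continuous g') {a b t x : ℝ} (ht : t ∈ Set.Icc a b) (hx : x ∈ Set.Icc a b) :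
    ‖g x - g t‖ ≤ ∫ u in a..b, ‖g' u‖ := by
  rw [← integral_eq_sub_of_hasDerivAt (fun u _ => hg u) (hg'.intervalIntegrable _ _)]
  refine norm_integral_le_abs_integral_norm.trans ?_
  have hab : a ≤ b := ht.1.trans ht.2
  calc |∫ u in t..x, ‖g' u‖| ≤ |∫ u in a..b, ‖g' u‖| := by
        refine abs_integral_mono_interval ?_ (.of_forall fun u => norm_nonneg _)
          (hg'.norm.intervalIntegrable _ _)
        rw [Set.uIoc_of_le hab]
        exact Set.Ioc_subset_Ioc (le_min ht.1 hx.1) (max_le ht.2 hx.2)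
    _ = ∫ u in a..b, ‖g' u‖ := abs_of_nonneg (integral_nonneg hab fun u _ => norm_nonneg _)

lemma norm_le_average_add_integral_norm_deriv {g g' : ℝ → E}
    (hg : ∀ t, HasDerivAt g (g' t) t) (hg' : Continuous g') {a b x : ℝ} (hab : a < b)
    (hx : x ∈ Set.Icc a b) :
    ‖g x‖ ≤ (b - a)⁻¹ * (∫ t in a..b, ‖g t‖) + ∫ t in a..b, ‖g' t‖ := by
  have hgc : Continuous g := continuous_iff_continuousAt.2 fun t => (hg t).continuousAt
  set C := ∫ t in a..b, ‖g' t‖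
  have hpt : ∀ t ∈ Set.Icc a b, ‖g x‖ ≤ ‖g t‖ + C := fun t ht =>
    norm_le_norm_add_norm_sub' (g x) (g t) |>.trans <| by
      gcongr; exact norm_sub_le_integral_norm_deriv hg hg' ht hx
  have hint : (b - a) * ‖g x‖ ≤ (∫ t in a..b, ‖g t‖) + (b - a) * C := by
    calc (b - a) * ‖g x‖ = ∫ _ in a..b, ‖g x‖ := by simp
      _ ≤ ∫ t in a..b, (‖g t‖ + C) :=
        integral_mono_on hab.le intervalIntegrable_const
          ((hgc.norm.add continuous_const).intervalIntegrable _ _) hpt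
      _ = (∫ t in a..b, ‖g t‖) + (b - a) * C := by
        rw [integral_add (hgc.norm.intervalIntegrable _ _) intervalIntegrable_const]
        simp
  have hba : 0 < b - a := sub_pos.2 hab
  rw [inv_mul_eq_div, ← sub_le_iff_le_add, le_div_iff₀ hba]
  linarith

lemma norm_sq_le_integral_gallagher {F F' : ℝ → ℂ} (hF : ∀ t, HasDerivAt F (F' t) t)
    (hF' : Continuous F') {a b x : ℝ} (hab : a < b) (hx : x ∈ Set.Icc a b) :
    ‖F x‖ ^ 2 ≤ ∫ t in a..b, ((b - a)⁻¹ * ‖F t‖ ^ 2 + 2 * ‖F t‖ * ‖F' t‖) := by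
  have hFc : Continuous F := continuous_iff_continuousAt.2 fun t => (hF t).continuousAt
  have h := norm_le_average_add_integral_norm_deriv (g := fun t => F t * F t)
    (fun t => (hF t).mul (hF t)) ((hF'.mul hFc).add (hFc.mul hF')) hab hx
  simp only [← sq, norm_pow] at h
  rw [integral_add (f := fun t => (b - a)⁻¹ * ‖F t‖ ^ 2) (g := fun t => 2 * ‖F t‖ * ‖F' t‖)
    (Continuous.intervalIntegrable (by fun_prop) _ _)
    (Continuous.intervalIntegrable (by fun_prop) _ _), intervalIntegral.integral_const_mul]
  refine h.trans (add_le_add_right (integral_mono_on hab.le ?_ ?_ fun t _ => ?_) _)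
  · exact Continuous.intervalIntegrable (by fun_prop) _ _
  · exact Continuous.intervalIntegrable (by fun_prop) _ _
  calc ‖F' t * F t + F t * F' t‖ ≤ ‖F' t‖ * ‖F t‖ + ‖F t‖ * ‖F' t‖ := by
        simpa only [norm_mul] using norm_add_le (F' t * F t) (F t * F' t)
    _ = 2 * ‖F t‖ * ‖F' t‖ := by ring

end Gallagher

lemma Function.Periodic.setIntegral_Ioc_add_two {H : ℝ → ℝ} (hH : Continuous H)
    (hHp : Periodic H 1) (a : ℝ) :
    ∫ t in Set.Ioc a (a + 2), H t = 2 * ∫ t in (0 : ℝ)..1, H t := by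
  have h := hHp.intervalIntegral_add_zsmul_eq 2 a fun _ _ => hH.intervalIntegrable _ _
  rw [hHp.intervalIntegral_add_eq a 0] at h
  norm_num at h
  rw [← integral_of_le (by linarith), h]

lemma sum_setIntegral_Ioc_le_two_mul_integral {κ : Type*} (P : Finset κ) (x : κ → ℝ)
    (hx : ∀ i ∈ P, x i ∈ Set.Ico (0 : ℝ) 1) {δ : ℝ} (hδ : δ ≤ 1)
    (hsep : ∀ i ∈ P, ∀ j ∈ P, i ≠ j → δ ≤ |x i - x j|) {H : ℝ → ℝ} (hH : Continuous H)
    (hH0 : 0 ≤ H) (hHp : Periodic H 1) :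
    ∑ i ∈ P, ∫ t in Set.Ioc (x i - δ / 2) (x i + δ / 2), H t ≤ 2 * ∫ t in (0 : ℝ)..1, H t := by
  have hdisj : Set.Pairwise P (Disjoint on fun i => Set.Ioc (x i - δ / 2) (x i + δ / 2)) := by
    intro i hi j hj hij
    have h := hsep i hi j hj hij
    rw [onFun, Set.Ioc_disjoint_Ioc]
    rcases le_total (x i) (x j) with hle | hle
    · rw [abs_of_nonpos (by linarith)] at h
      exact (min_le_left _ _).trans (by linarith [le_max_right (x i - δ / 2) (x j - δ / 2)])
    · rw [abs_of_nonneg (by linarith)] at h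
      exact (min_le_right _ _).trans (by linarith [le_max_left (x i - δ / 2) (x j - δ / 2)])
  have hsub : (⋃ i ∈ P, Set.Ioc (x i - δ / 2) (x i + δ / 2)) ⊆
      Set.Ioc (-(1 / 2)) (-(1 / 2) + 2) := by
    simp only [Set.iUnion_subset_iff]
    intro i hi t ht
    have := hx i hi
    exact ⟨by linarith [ht.1, this.1], by linarith [ht.2, this.2]⟩
  rw [← integral_biUnion_finset P (fun _ _ => measurableSet_Ioc) hdisj
    fun _ _ => hH.integrableOn_Icc.mono_set Set.Ioc_subset_Icc_self,
    ← hHp.setIntegral_Ioc_add_two hH (-(1 / 2))]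
  exact setIntegral_mono_set (hH.integrableOn_Icc.mono_set Set.Ioc_subset_Icc_self)
    (.of_forall hH0) hsub.eventuallyLE

lemma Nat.Coprime.eq_and_eq_of_mul_eq_mul {c k c' k' : ℕ} (h : c.Coprime k) (h' : c'.Coprime k')
    (heq : c * k' = c' * k) : c = c' ∧ k = k' := by
  have hkk : k = k' := Nat.dvd_antisymm
    (h.symm.dvd_of_dvd_mul_left ⟨c', by rw [heq, mul_comm]⟩)
    (h'.symm.dvd_of_dvd_mul_left ⟨c, by rw [← heq, mul_comm]⟩)
  subst hkk
  refine ⟨?_, rfl⟩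
  rcases Nat.eq_zero_or_pos k with rfl | hk
  · rw [Nat.coprime_zero_right] at h h'
    rw [h, h']
  · exact Nat.eq_of_mul_eq_mul_right hk heq

lemma inv_sq_le_abs_div_sub_div {N k k' c c' : ℕ} (hk : k ∈ Icc 1 N) (hk' : k' ∈ Icc 1 N)
    (h : c.Coprime k) (h' : c'.Coprime k') (hne : (k, c) ≠ (k', c')) :
    ((N : ℝ) ^ 2)⁻¹ ≤ |(c : ℝ) / k - c' / k'| := by
  rw [mem_Icc] at hk hk'
  have hk0 : (0 : ℝ) < k := by exact_mod_cast hk.1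
  have hk0' : (0 : ℝ) < k' := by exact_mod_cast hk'.1
  have hone : (1 : ℝ) ≤ |(c : ℝ) * k' - k * c'| := by
    have hz : (c : ℤ) * k' - k * c' ≠ 0 := fun hz => hne <| by
      obtain ⟨rfl, rfl⟩ := h.eq_and_eq_of_mul_eq_mul h' <| by
        rw [mul_comm c' k]; exact_mod_cast sub_eq_zero.mp hz
      rfl
    exact_mod_cast Int.one_le_abs hz
  rw [div_sub_div _ _ hk0.ne' hk0'.ne', abs_div, abs_of_pos (mul_pos hk0 hk0')]
  have hkN : (k : ℝ) ≤ N := by exact_mod_cast hk.2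
  have hkN' : (k' : ℝ) ≤ N := by exact_mod_cast hk'.2
  calc ((N : ℝ) ^ 2)⁻¹ ≤ 1 / (k * k') := by rw [sq, one_div]; gcongr
    _ ≤ |(c : ℝ) * k' - k * c'| / (k * k') := by gcongr

section LargeSieve

variable {ι : Type*} (A : Finset ι) (a : ι → ℂ) (s : ι → ℤ)

lemma integral_two_mul_norm_trigPoly_mul_norm_deriv_le (hs : Set.InjOn s A) {S : ℝ} (hS : 0 < S)
    (hsS : ∀ n ∈ A, |(s n : ℝ)| ≤ S) :
    ∫ t in (0 : ℝ)..1, 2 * ‖trigPoly A a s t‖ * ‖trigPoly A (fun n => 2 * π * I * s n * a n) s t‖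
      ≤ 4 * π * S * ∑ n ∈ A, ‖a n‖ ^ 2 := by
  set F := trigPoly A a s
  set F' := trigPoly A (fun n => 2 * π * I * s n * a n) s
  set L := 2 * π * S
  have hL : 0 < L := by positivity
  have hF : Continuous F := continuous_trigPoly A a s
  have hF' : Continuous F' := continuous_trigPoly A _ s
  have hcoeff : ∑ n ∈ A, ‖2 * π * I * s n * a n‖ ^ 2 ≤ L ^ 2 * ∑ n ∈ A, ‖a n‖ ^ 2 := by
    rw [mul_sum]
    refine sum_le_sum fun n hn => ?_
    have : ‖2 * π * I * (s n : ℂ)‖ ≤ L := by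
      simpa [abs_of_pos Real.pi_pos, L] using
        mul_le_mul_of_nonneg_left (hsS n hn) (by positivity : (0 : ℝ) ≤ 2 * π)
    rw [norm_mul, mul_pow]
    gcongr
  calc ∫ t in (0 : ℝ)..1, 2 * ‖F t‖ * ‖F' t‖
      ≤ ∫ t in (0 : ℝ)..1, (L * ‖F t‖ ^ 2 + L⁻¹ * ‖F' t‖ ^ 2) := by
        refine integral_mono_on zero_le_one ?_ ?_ fun t _ => two_mul_le_add_mul_sq hL
        all_goals exact Continuous.intervalIntegrable (by fun_prop) _ _
    _ = L * ∑ n ∈ A, ‖a n‖ ^ 2 + L⁻¹ * ∑ n ∈ A, ‖2 * π * I * s n * a n‖ ^ 2 := by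
        rw [integral_add (Continuous.intervalIntegrable (by fun_prop) _ _)
          (Continuous.intervalIntegrable (by fun_prop) _ _), intervalIntegral.integral_const_mul,
          intervalIntegral.integral_const_mul, integral_norm_trigPoly_sq A a s hs,
          integral_norm_trigPoly_sq A _ s hs]
    _ ≤ L * ∑ n ∈ A, ‖a n‖ ^ 2 + L⁻¹ * (L ^ 2 * ∑ n ∈ A, ‖a n‖ ^ 2) := by gcongr
    _ = 4 * π * S * ∑ n ∈ A, ‖a n‖ ^ 2 := by field_simp; ring

theorem sum_norm_trigPoly_sq_le (hs : Set.InjOn s A) {S : ℝ} (hS : 0 < S)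
    (hsS : ∀ n ∈ A, |(s n : ℝ)| ≤ S) {κ : Type*} (P : Finset κ) (x : κ → ℝ)
    (hx : ∀ i ∈ P, x i ∈ Set.Ico (0 : ℝ) 1) {δ : ℝ} (hδ : 0 < δ) (hδ1 : δ ≤ 1)
    (hsep : ∀ i ∈ P, ∀ j ∈ P, i ≠ j → δ ≤ |x i - x j|) :
    ∑ i ∈ P, ‖trigPoly A a s (x i)‖ ^ 2 ≤ 2 * (δ⁻¹ + 4 * π * S) * ∑ n ∈ A, ‖a n‖ ^ 2 := by
  set F := trigPoly A a s
  set F' := trigPoly A (fun n => 2 * π * I * s n * a n) s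
  have hF : Continuous F := continuous_trigPoly A a s
  have hF' : Continuous F' := continuous_trigPoly A _ s
  set H : ℝ → ℝ := fun t => δ⁻¹ * ‖F t‖ ^ 2 + 2 * ‖F t‖ * ‖F' t‖
  have hH : Continuous H := by fun_prop
  have hHp : Periodic H 1 := fun t => by
    simp only [H, F, F', trigPoly_periodic A _ s t]
  have hpt : ∀ y, ‖F y‖ ^ 2 ≤ ∫ t in Set.Ioc (y - δ / 2) (y + δ / 2), H t := fun y => by
    have hlt : y - δ / 2 < y + δ / 2 := by linarith
    have h := norm_sq_le_integral_gallagher (hasDerivAt_trigPoly A a s) hF' (x := y) hlt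
      ⟨by linarith, by linarith⟩
    rwa [show y + δ / 2 - (y - δ / 2) = δ by ring, integral_of_le hlt.le] at h
  have hH0 : 0 ≤ H := fun t => by positivity
  calc ∑ i ∈ P, ‖F (x i)‖ ^ 2
      ≤ ∑ i ∈ P, ∫ t in Set.Ioc (x i - δ / 2) (x i + δ / 2), H t := sum_le_sum fun i _ => hpt _
    _ ≤ 2 * ∫ t in (0 : ℝ)..1, H t :=
        sum_setIntegral_Ioc_le_two_mul_integral P x hx hδ1 hsep hH hH0 hHp
    _ = 2 * (δ⁻¹ * ∑ n ∈ A, ‖a n‖ ^ 2 + ∫ t in (0 : ℝ)..1, 2 * ‖F t‖ * ‖F' t‖) := by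
        rw [integral_add (Continuous.intervalIntegrable (by fun_prop) _ _)
          (Continuous.intervalIntegrable (by fun_prop) _ _), intervalIntegral.integral_const_mul,
          integral_norm_trigPoly_sq A a s hs]
    _ ≤ 2 * (δ⁻¹ * ∑ n ∈ A, ‖a n‖ ^ 2 + 4 * π * S * ∑ n ∈ A, ‖a n‖ ^ 2) := by
        gcongr
        exact integral_two_mul_norm_trigPoly_mul_norm_deriv_le A a s hs hS hsS
    _ = 2 * (δ⁻¹ + 4 * π * S) * ∑ n ∈ A, ‖a n‖ ^ 2 := by ring

end LargeSieve

theorem sum_farey_norm_trigPoly_sq_le {ι : Type*} (A : Finset ι) (a : ι → ℂ) (s : ι → ℤ)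
    (hs : Set.InjOn s A) {S : ℝ} (hS : 0 < S) (hsS : ∀ n ∈ A, |(s n : ℝ)| ≤ S) {N : ℕ}
    (hN : 1 ≤ N) :
    ∑ k ∈ Icc 1 N, ∑ c ∈ (range k).filter (fun c => c.Coprime k),
        ‖trigPoly A a s ((c : ℝ) / k)‖ ^ 2
      ≤ 2 * ((N : ℝ) ^ 2 + 4 * π * S) * ∑ n ∈ A, ‖a n‖ ^ 2 := by
  have hN1 : (1 : ℝ) ≤ N := by exact_mod_cast hN
  have h := sum_norm_trigPoly_sq_le A a s hs hS hsS
    ((Icc 1 N).sigma fun k => (range k).filter (fun c => c.Coprime k))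
    (fun i => (i.2 : ℝ) / i.1) ?_ (δ := ((N : ℝ) ^ 2)⁻¹) (by positivity)
    (inv_le_one_of_one_le₀ (one_le_pow₀ hN1)) ?_
  · rwa [inv_inv, sum_sigma] at h
  · simp only [mem_sigma, mem_filter, mem_range, mem_Icc]
    rintro ⟨k, c⟩ ⟨⟨hk, -⟩, hc, -⟩
    have hk0 : (0 : ℝ) < k := by exact_mod_cast hk
    exact ⟨by positivity, (div_lt_one hk0).2 (by exact_mod_cast hc)⟩
  · simp only [mem_sigma, mem_filter, mem_range]
    rintro ⟨k, c⟩ ⟨hk, -, hc⟩ ⟨k', c'⟩ ⟨hk', -, hc'⟩ hne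
    refine inv_sq_le_abs_div_sub_div hk hk' hc hc' fun h => hne ?_
    rw [Prod.mk.injEq] at h
    exact Sigma.ext h.1 (heq_of_eq h.2)

/-- Large sieve inequality: `∑_{k ≤ K} ∑*_{c mod k} |∑_{n ≤ T} γ_n e_k(c s_n)|² ≪ (K² + S)T`. -/
theorem stmt14 : ∃ C : ℝ, 0 < C ∧ ∀ (K : ℝ) (T S : ℕ) (γ : ℕ → ℂ) (s : ℕ → ℕ),
    1 ≤ K → 1 ≤ T → StrictMonoOn s (Set.Icc 1 T) → (∀ n ∈ Set.Icc 1 T, s n ≤ S) →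
    (∀ n, ‖γ n‖ ≤ 1) →
    ∑ k ∈ Finset.Icc 1 ⌊K⌋₊, ∑ c ∈ (Finset.range k).filter (fun c => Nat.Coprime c k),
        ‖∑ n ∈ Finset.Icc 1 T,
            γ n * Complex.exp (2 * Real.pi * Complex.I * ((c * s n : ℕ) : ℂ) / k)‖ ^ 2
      ≤ C * (K ^ 2 + (S : ℝ)) * (T : ℝ) := by
  refine ⟨34, by norm_num, fun K T S γ s hK _ hmono hsS hγ => ?_⟩
  have hN : 1 ≤ ⌊K⌋₊ := Nat.le_floor (by exact_mod_cast hK)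
  have hNK : (⌊K⌋₊ : ℝ) ≤ K := Nat.floor_le (by linarith)
  have hinj : Set.InjOn (fun n => (s n : ℤ)) (Icc 1 T) :=
    Nat.cast_injective.comp_injOn (by simpa using hmono.injOn)
  have hsS' : ∀ n ∈ Icc 1 T, |((s n : ℤ) : ℝ)| ≤ S + 1 := fun n hn => by
    have : (s n : ℝ) ≤ S := by exact_mod_cast hsS n (by simpa using hn)
    rw [Int.cast_natCast, abs_of_nonneg (by positivity)]
    linarith
  have hγT : ∑ n ∈ Icc 1 T, ‖γ n‖ ^ 2 ≤ T := by
    simpa using sum_le_sum fun n (_ : n ∈ Icc 1 T) => pow_le_one₀ (norm_nonneg _) (hγ n)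
  calc _ = ∑ k ∈ Icc 1 ⌊K⌋₊, ∑ c ∈ (range k).filter (fun c => c.Coprime k),
        ‖trigPoly (Icc 1 T) γ (fun n => (s n : ℤ)) ((c : ℝ) / k)‖ ^ 2 := by
        refine sum_congr rfl fun k _ => sum_congr rfl fun c _ => ?_
        simp only [trigPoly]
        congr 2
        refine sum_congr rfl fun n _ => ?_
        push_cast
        ring_nf
    _ ≤ 2 * ((⌊K⌋₊ : ℝ) ^ 2 + 4 * π * (S + 1)) * ∑ n ∈ Icc 1 T, ‖γ n‖ ^ 2 :=
        sum_farey_norm_trigPoly_sq_le (Icc 1 T) γ _ hinj (by positivity) hsS' hN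
    _ ≤ 34 * (K ^ 2 + S) * T := by
        have hK2 : (⌊K⌋₊ : ℝ) ^ 2 ≤ K ^ 2 := by gcongr
        have hS0 : (0 : ℝ) ≤ S := by positivity
        have hpi := Real.pi_le_four
        have : 2 * ((⌊K⌋₊ : ℝ) ^ 2 + 4 * π * (S + 1)) ≤ 34 * (K ^ 2 + S) := by
          nlinarith
        calc _ ≤ 2 * ((⌊K⌋₊ : ℝ) ^ 2 + 4 * π * (S + 1)) * T := by gcongr
          _ ≤ 34 * (K ^ 2 + S) * T := by gcongr
end
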